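/- Correctness of the automata-based monitor: M_D(A, Ā)(ρ*, t) = V^el_D(L(A))(ρ*, t) for all delay sets D, all timed Büchi automata A with complement automaton Ā (L(Ā) = TΣ^ω \ L(A)), all D-observations ρ*, and all t ≥ τ(ρ*). -/

import Mathlib

open scoped Classical

universe u v w

/-- A finite timed word: nonnegative, non-decreasing timestamps. -/
def IsFTW {A : Type u} (ρ : List (A × ℝ)) : Prop :=
  (∀ p ∈ ρ, 0 ≤ p.2) ∧ ρ.Chain' (fun p q => p.2 ≤ q.2)

/-- Duration of a finite timed word: its last timestamp (0 for the empty word). -/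
def dur {A : Type u} (ρ : List (A × ℝ)) : ℝ := ((ρ.getLast?).map Prod.snd).getD 0

/-- An infinite timed word: nonnegative, non-decreasing, divergent timestamps. -/
def IsITW {A : Type u} (μ : ℕ → A × ℝ) : Prop :=
  (∀ i, 0 ≤ (μ i).2) ∧ (∀ i, (μ i).2 ≤ (μ (i + 1)).2) ∧
    Filter.Tendsto (fun i => (μ i).2) Filter.atTop Filter.atTop

/-- Shift every timestamp of an infinite timed word by `t`. -/
def shiftI {A : Type u} (μ : ℕ → A × ℝ) (t : ℝ) : ℕ → A × ℝ :=
  fun i => ((μ i).1, (μ i).2 + t)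

/-- Shift every timestamp of a finite timed word by `t`. -/
def shiftF {A : Type u} (ρ : List (A × ℝ)) (t : ℝ) : List (A × ℝ) :=
  ρ.map (fun p => (p.1, p.2 + t))

/-- Timed concatenation of two finite timed words at time `t`. -/
def catF {A : Type u} (ρ : List (A × ℝ)) (t : ℝ) (ρ' : List (A × ℝ)) : List (A × ℝ) :=
  ρ ++ shiftF ρ' t

/-- Timed concatenation `ρ ·_t μ` of a finite and an infinite timed word. -/
def cat {A : Type u} (ρ : List (A × ℝ)) (t : ℝ) (μ : ℕ → A × ℝ) : ℕ → A × ℝ :=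
  fun i => if h : i < ρ.length then ρ.get ⟨i, h⟩
    else ((μ (i - ρ.length)).1, (μ (i - ρ.length)).2 + t)

/-- `ρ` is consistent with observation `ρs` at time `t` under latency `δ` and jitter `ε`. -/
def Consistent {A : Type u} (δ ε : ℝ) (ρs ρ : List (A × ℝ)) (t : ℝ) : Prop :=
  IsFTW ρ ∧ dur ρ ≤ t ∧ dur ρs ≤ t ∧ ρs.length ≤ ρ.length ∧
  (∀ i, i < ρs.length → ∀ p q, ρ[i]? = some p → ρs[i]? = some q →
      p.1 = q.1 ∧ δ ≤ q.2 - p.2 ∧ q.2 - p.2 ≤ δ + ε) ∧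
  (ρs.length < ρ.length → ∀ p, ρ[ρs.length]? = some p → t - (δ + ε) ≤ p.2)

/-- Ground-truths consistent with `ρs` at `t` under latency `δ` and jitter `ε`. -/
def GTd {A : Type u} (δ ε : ℝ) (ρs : List (A × ℝ)) (t : ℝ) : Set (List (A × ℝ)) :=
  {ρ | Consistent δ ε ρs ρ t}

/-- Ground-truths consistent with `ρs` at `t` under some delay in `D`. -/
def GT {A : Type u} (D : Set (ℝ × ℝ)) (ρs : List (A × ℝ)) (t : ℝ) : Set (List (A × ℝ)) :=
  {ρ | ∃ d ∈ D, Consistent d.1 d.2 ρs ρ t}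

/-- A delay set: a nonempty set of (latency, jitter) pairs in ℝ≥0². -/
def DelaySet (D : Set (ℝ × ℝ)) : Prop :=
  D.Nonempty ∧ ∀ d ∈ D, 0 ≤ d.1 ∧ 0 ≤ d.2

/-- A `D`-observation: a finite timed word whose first timestamp is at least `δ`
for some `(δ,ε) ∈ D`. -/
def DObs {A : Type u} (D : Set (ℝ × ℝ)) (ρs : List (A × ℝ)) : Prop :=
  IsFTW ρs ∧ ∃ d ∈ D, ∀ p ∈ ρs.head?, d.1 ≤ p.2

/-- The three-valued verdict domain. -/
inductive Verdict | top | bot | unknown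
deriving DecidableEq

/-- Monitoring verdict under delay. -/
noncomputable def verdict {A : Type u} (D : Set (ℝ × ℝ)) (L : Set (ℕ → A × ℝ))
    (ρs : List (A × ℝ)) (t : ℝ) : Verdict :=
  if ∀ ρ ∈ GT D ρs t, ∀ μ, IsITW μ → cat ρ t μ ∈ L then .top
  else if ∀ ρ ∈ GT D ρs t, ∀ μ, IsITW μ → cat ρ t μ ∉ L then .bot
  else .unknown

/-- Equal-length consistent ground-truths. -/
def GTel {A : Type u} (δ ε : ℝ) (ρs : List (A × ℝ)) (t : ℝ) : Set (List (A × ℝ)) :=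
  {ρ | Consistent δ ε ρs ρ t ∧ ρ.length = ρs.length}

/-- Equal-length monitoring verdict under delay. -/
noncomputable def verdictEL {A : Type u} (D : Set (ℝ × ℝ)) (L : Set (ℕ → A × ℝ))
    (ρs : List (A × ℝ)) (t : ℝ) : Verdict :=
  if ∀ d ∈ D, ∀ ρ ∈ GTel d.1 d.2 ρs t, ∀ μ, IsITW μ →
      cat ρ (max (dur ρ) (t - (d.1 + d.2))) μ ∈ L then .top
  else if ∀ d ∈ D, ∀ ρ ∈ GTel d.1 d.2 ρs t, ∀ μ, IsITW μ →
      cat ρ (max (dur ρ) (t - (d.1 + d.2))) μ ∉ L then .bot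
  else .unknown

/-- The set of delays consistent with observation `ρs` at time `t` w.r.t. `L`. -/
def ConsDelays {A : Type u} (L : Set (ℕ → A × ℝ)) (ρs : List (A × ℝ)) (t : ℝ) :
    Set (ℝ × ℝ) :=
  {d | ∃ ρ ∈ GTd d.1 d.2 ρs t, ∃ μ, IsITW μ ∧ cat ρ t μ ∈ L}

/-- Extension relation on (finite timed word, time) pairs. -/
def ExtRel {A : Type u} (ρ : List (A × ℝ)) (t : ℝ) (ρ' : List (A × ℝ)) (t' : ℝ) : Prop :=
  ρ <+: ρ' ∧ ((ρ.length = ρ'.length ∧ t ≤ t') ∨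
    (ρ.length < ρ'.length ∧ ∀ p, ρ'[ρ.length]? = some p → t ≤ p.2))
/-- A timed Büchi automaton with locations `Q` and clocks `C`;
guards are modeled as sets of clock valuations. -/
structure TBA (A : Type u) (Q : Type v) (C : Type w) where
  init : Set Q
  trans : Set (Q × Q × A × Set C × Set (C → ℝ))
  acc : Set Q

/-- Reset the clocks in `lam` to zero. -/
noncomputable def resetVal {C : Type w} (lam : Set C) (v : C → ℝ) : C → ℝ :=
  fun x => if x ∈ lam then 0 else v x

/-- One transition step of a TBA, reading letter `a` after `d` time units. -/
def Step {A : Type u} {Q : Type v} {C : Type w} (M : TBA A Q C)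
    (s : Q × (C → ℝ)) (a : A) (d : ℝ) (s' : Q × (C → ℝ)) : Prop :=
  ∃ q' lam g, (s.1, q', a, lam, g) ∈ M.trans ∧ (fun x => s.2 x + d) ∈ g ∧
    s'.1 = q' ∧ s'.2 = resetVal lam (fun x => s.2 x + d)

/-- An infinite run of a TBA from state `s0` over the infinite timed word `μ`. -/
def InfRun {A : Type u} {Q : Type v} {C : Type w} (M : TBA A Q C)
    (s0 : Q × (C → ℝ)) (μ : ℕ → A × ℝ) (r : ℕ → Q × (C → ℝ)) : Prop :=
  r 0 = s0 ∧ ∀ i, Step M (r i) (μ i).1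
    ((μ i).2 - (if i = 0 then 0 else (μ (i - 1)).2)) (r (i + 1))

/-- The language of a TBA from a given state. -/
def LangFrom {A : Type u} {Q : Type v} {C : Type w} (M : TBA A Q C)
    (s : Q × (C → ℝ)) : Set (ℕ → A × ℝ) :=
  {μ | IsITW μ ∧ ∃ r, InfRun M s μ r ∧ {i | (r i).1 ∈ M.acc}.Infinite}

/-- The language of a TBA. -/
def Lang {A : Type u} {Q : Type v} {C : Type w} (M : TBA A Q C) : Set (ℕ → A × ℝ) :=
  {μ | ∃ q0 ∈ M.init, μ ∈ LangFrom M (q0, fun _ => 0)}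

/-- The states of a TBA with nonempty language. -/
def NonEmptyStates {A : Type u} {Q : Type v} {C : Type w} (M : TBA A Q C) :
    Set (Q × (C → ℝ)) :=
  {s | (LangFrom M s).Nonempty}

/-- The `i`-th timestamp of a finite timed word (default 0). -/
def tsd {A : Type u} (ρ : List (A × ℝ)) (i : ℕ) : ℝ := ((ρ[i]?).map Prod.snd).getD 0

/-- A finite run of a TBA from `s0` over `ρ`, ending in `send`. -/
def FinRun {A : Type u} {Q : Type v} {C : Type w} (M : TBA A Q C)
    (s0 : Q × (C → ℝ)) (ρ : List (A × ℝ)) (send : Q × (C → ℝ)) : Prop :=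
  ∃ r : ℕ → Q × (C → ℝ), r 0 = s0 ∧ r ρ.length = send ∧
    ∀ i, i < ρ.length → ∀ p, ρ[i]? = some p →
      Step M (r i) p.1 (p.2 - (if i = 0 then 0 else tsd ρ (i - 1))) (r (i + 1))

/-- The reach-set of `ρs` in `M` at `t` w.r.t. `D`: states reached on
equal-length consistent ground-truths, time-shifted by
`max 0 (t - (dur ρ + δ + ε))`. -/
def ReachSet {A : Type u} {Q : Type v} {C : Type w} (M : TBA A Q C)
    (D : Set (ℝ × ℝ)) (ρs : List (A × ℝ)) (t : ℝ) : Set (Q × (C → ℝ)) :=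
  {s | ∃ d ∈ D, ∃ ρ ∈ GTel d.1 d.2 ρs t, ∃ q0 ∈ M.init, ∃ v : C → ℝ,
      FinRun M (q0, fun _ => 0) ρ (s.1, v) ∧
      s.2 = fun x => v x + max 0 (t - (dur ρ + d.1 + d.2))}

/-- The automata-based monitor. -/
noncomputable def Monitor {A : Type u} {Q : Type v} {C : Type w} {Q' : Type*} {C' : Type*}
    (M : TBA A Q C) (Mbar : TBA A Q' C') (D : Set (ℝ × ℝ))
    (ρs : List (A × ℝ)) (t : ℝ) : Verdict :=
  if ReachSet Mbar D ρs t ∩ NonEmptyStates Mbar = ∅ then .top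
  else if ReachSet M D ρs t ∩ NonEmptyStates M = ∅ then .bot
  else .unknown

/-- Input projection of a timed word, w.r.t. the input indicator `inp`. -/
def inProj {A : Type u} (inp : A → Bool) (ρ : List (A × ℝ)) : List (A × ℝ) :=
  ρ.filter (fun p => inp p.1)

/-- Output projection of a timed word. -/
def outProj {A : Type u} (inp : A → Bool) (ρ : List (A × ℝ)) : List (A × ℝ) :=
  ρ.filter (fun p => !inp p.1)

/-- Testing consistency of ground-truth `ρ` with observation `ρs` at time `t`
under IO delay `d = (δ_I, ε_I, δ_O, ε_O)`. -/
def TCons {A : Type u} (inp : A → Bool) (d : ℝ × ℝ × ℝ × ℝ)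
    (ρs ρ : List (A × ℝ)) (t : ℝ) : Prop :=
  IsFTW ρ ∧ dur ρs ≤ t ∧ dur ρ ≤ max t (dur (inProj inp ρs) + (d.1 + d.2.1)) ∧
  (inProj inp ρ).length = (inProj inp ρs).length ∧
  (∀ (i : ℕ) (p q : A × ℝ), (inProj inp ρ)[i]? = some p → (inProj inp ρs)[i]? = some q →
      p.1 = q.1 ∧ d.1 ≤ p.2 - q.2 ∧ p.2 - q.2 ≤ d.1 + d.2.1) ∧
  (outProj inp ρs).length ≤ (outProj inp ρ).length ∧
  (∀ i, i < (outProj inp ρs).length → ∀ p q, (outProj inp ρ)[i]? = some p →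
      (outProj inp ρs)[i]? = some q →
      p.1 = q.1 ∧ d.2.2.1 ≤ q.2 - p.2 ∧ q.2 - p.2 ≤ d.2.2.1 + d.2.2.2) ∧
  ((outProj inp ρs).length < (outProj inp ρ).length →
    ∀ p, (outProj inp ρ)[(outProj inp ρs).length]? = some p →
      t - (d.2.2.1 + d.2.2.2) ≤ p.2)

/-- Testing-consistent ground-truths under some delay in `D`. -/
def GThat {A : Type u} (inp : A → Bool) (D : Set (ℝ × ℝ × ℝ × ℝ))
    (ρs : List (A × ℝ)) (t : ℝ) : Set (List (A × ℝ)) :=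
  {ρ | ∃ d ∈ D, TCons inp d ρs ρ t}

/-- An IO delay set: nonempty subset of ℝ≥0⁴. -/
def IODelaySet (D : Set (ℝ × ℝ × ℝ × ℝ)) : Prop :=
  D.Nonempty ∧ ∀ d ∈ D, 0 ≤ d.1 ∧ 0 ≤ d.2.1 ∧ 0 ≤ d.2.2.1 ∧ 0 ≤ d.2.2.2

/-- An IO `D`-observation: the first observed output has timestamp at least `δ_O`
for some delay tuple in `D`. -/
def DObsIO {A : Type u} (inp : A → Bool) (D : Set (ℝ × ℝ × ℝ × ℝ))
    (ρs : List (A × ℝ)) : Prop :=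
  IsFTW ρs ∧ ∃ d ∈ D, ∀ p ∈ (outProj inp ρs).head?, d.2.2.1 ≤ p.2

/-- Testing verdict under delay. -/
noncomputable def tverdict {A : Type u} (inp : A → Bool) (D : Set (ℝ × ℝ × ℝ × ℝ))
    (L : Set (ℕ → A × ℝ)) (ρs : List (A × ℝ)) (t : ℝ) : Verdict :=
  if ∀ ρ ∈ GThat inp D ρs t, ∀ μ, IsITW μ → cat ρ (max t (dur ρ)) μ ∈ L then .top
  else if ∀ ρ ∈ GThat inp D ρs t, ∀ μ, IsITW μ → cat ρ (max t (dur ρ)) μ ∉ L then .bot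
  else .unknown

/-- The set of IO delays consistent with observation `ρs` at `t` w.r.t. `L`. -/
def TConsDelays {A : Type u} (inp : A → Bool) (L : Set (ℕ → A × ℝ))
    (ρs : List (A × ℝ)) (t : ℝ) : Set (ℝ × ℝ × ℝ × ℝ) :=
  {d | ∃ ρ, TCons inp d ρs ρ t ∧ ∃ μ, IsITW μ ∧ cat ρ (max t (dur ρ)) μ ∈ L}

section AuxLemmas
variable {A : Type u}

lemma cat_lt {ρ : List (A × ℝ)} {T : ℝ} {μ : ℕ → A × ℝ} {i : ℕ} (h : i < ρ.length) :
    cat ρ T μ i = ρ.get ⟨i, h⟩ := by simp [cat, h]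

lemma cat_ge {ρ : List (A × ℝ)} {T : ℝ} {μ : ℕ → A × ℝ} {i : ℕ} (h : ρ.length ≤ i) :
    cat ρ T μ i = ((μ (i - ρ.length)).1, (μ (i - ρ.length)).2 + T) := by
  simp [cat, Nat.not_lt.mpr h]

lemma ts_mono {ρ : List (A × ℝ)} (h : ρ.Chain' (fun p q => p.2 ≤ q.2))
    {i j : ℕ} (hij : i ≤ j) (hj : j < ρ.length) :
    (ρ.get ⟨i, lt_of_le_of_lt hij hj⟩).2 ≤ (ρ.get ⟨j, hj⟩).2 := by
  rcases eq_or_lt_of_le hij with rfl | hlt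
  · exact le_refl _
  · haveI : IsTrans (A × ℝ) (fun p q => p.2 ≤ q.2) := ⟨fun a b c => le_trans⟩
    have hp : ρ.Pairwise (fun p q => p.2 ≤ q.2) :=
      (List.isChain_iff_pairwise (R := fun p q : A × ℝ => p.2 ≤ q.2)).mp h
    exact (List.pairwise_iff_get.mp hp) ⟨i, _⟩ ⟨j, hj⟩ hlt

lemma dur_eq_getLast {ρ : List (A × ℝ)} (h : ρ ≠ []) : dur ρ = (ρ.getLast h).2 := by
  simp [dur, List.getLast?_eq_getLast h]

lemma ts_le_dur {ρ : List (A × ℝ)} (h : ρ.Chain' (fun p q => p.2 ≤ q.2))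
    {i : ℕ} (hi : i < ρ.length) : (ρ.get ⟨i, hi⟩).2 ≤ dur ρ := by
  have hne : ρ ≠ [] := List.ne_nil_of_length_pos (Nat.pos_of_ne_zero (by omega))
  rw [dur_eq_getLast hne, List.getLast_eq_getElem]
  exact ts_mono h (Nat.le_pred_of_lt hi) _

lemma dur_nonneg {ρ : List (A × ℝ)} (h : IsFTW ρ) : 0 ≤ dur ρ := by
  rcases eq_or_ne ρ [] with rfl | hne
  · simp [dur]
  · rw [dur_eq_getLast hne]
    exact h.1 _ (List.getLast_mem hne)

lemma isITW_cat {ρ : List (A × ℝ)} {T : ℝ} {μ : ℕ → A × ℝ}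
    (hρ : IsFTW ρ) (hμ : IsITW μ) (hT : dur ρ ≤ T) (hT0 : 0 ≤ T) :
    IsITW (cat ρ T μ) := by
  refine ⟨fun i => ?_, fun i => ?_, ?_⟩
  · rcases lt_or_ge i ρ.length with h | h
    · rw [cat_lt h]; exact hρ.1 _ (List.get_mem _ _)
    · rw [cat_ge h]; exact add_nonneg (hμ.1 _) hT0
  · rcases lt_or_ge (i+1) ρ.length with h | h
    · rw [cat_lt (Nat.lt_of_succ_lt h), cat_lt h]
      exact ts_mono hρ.2 (Nat.le_succ i) h
    · rw [cat_ge h]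
      rcases lt_or_ge i ρ.length with h' | h'
      · rw [cat_lt h']
        calc (ρ.get ⟨i, h'⟩).2 ≤ dur ρ := ts_le_dur hρ.2 h'
          _ ≤ T := hT
          _ ≤ (μ ((i+1) - ρ.length)).2 + T := le_add_of_nonneg_left (hμ.1 _)
      · rw [cat_ge h']
        have : i - ρ.length ≤ (i+1) - ρ.length := by omega
        have hm : ∀ a b, a ≤ b → (μ a).2 ≤ (μ b).2 := by
          intro a b hab
          induction b with
          | zero => simp_all
          | succ b ih =>
            rcases Nat.lt_or_ge a (b+1) with h1 | h1
            · exact le_trans (ih (by omega)) (hμ.2.1 b)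
            · have : a = b + 1 := by omega
              simp [this]
        simp only
        exact add_le_add_left (hm _ _ this) T
  · have h1 : Filter.Tendsto (fun i : ℕ => (μ (i - ρ.length)).2 + T)
        Filter.atTop Filter.atTop :=
      Filter.tendsto_atTop_add_const_right _ T
        (hμ.2.2.comp (Filter.tendsto_sub_atTop_nat ρ.length))
    refine h1.congr' ?_
    filter_upwards [Filter.eventually_ge_atTop ρ.length] with i hi
    rw [cat_ge hi]


end AuxLemmas

section RunLemmas
variable {A : Type u} {Q : Type v} {C : Type w}

lemma max_decomp (a b : ℝ) : max a b = a + max 0 (b - a) := by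
  rcases le_total b a with h | h
  · rw [max_eq_left h, max_eq_left (by linarith), add_zero]
  · rw [max_eq_right h, max_eq_right (by linarith)]; ring

lemma tsd_lt {ρ : List (A × ℝ)} {i : ℕ} (h : i < ρ.length) :
    tsd ρ i = (ρ.get ⟨i, h⟩).2 := by
  simp [tsd, List.getElem?_eq_getElem h]

lemma cat_elapsed_lt {ρ : List (A × ℝ)} {T : ℝ} {μ : ℕ → A × ℝ} {i : ℕ} (h : i < ρ.length) :
    (cat ρ T μ i).2 - (if i = 0 then 0 else (cat ρ T μ (i - 1)).2)
      = (ρ.get ⟨i, h⟩).2 - (if i = 0 then 0 else tsd ρ (i - 1)) := by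
  rcases Nat.eq_zero_or_pos i with rfl | hi
  · simp [cat_lt h]
  · have h1 : i - 1 < ρ.length := by omega
    rw [cat_lt h, if_neg (by omega), if_neg (by omega), cat_lt h1, tsd_lt h1]

lemma dur_eq_get {ρ : List (A × ℝ)} (h : ρ ≠ []) :
    dur ρ = (ρ.get ⟨ρ.length - 1, by
      have := List.length_pos_iff.mpr h; omega⟩).2 := by
  rw [dur_eq_getLast h, List.getLast_eq_getElem]
  rfl

lemma cat_elapsed_at {ρ : List (A × ℝ)} {T : ℝ} {μ : ℕ → A × ℝ} :
    (cat ρ T μ ρ.length).2 - (if ρ.length = 0 then 0 else (cat ρ T μ (ρ.length - 1)).2)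
      = (μ 0).2 + T - dur ρ := by
  rw [cat_ge (le_refl _), Nat.sub_self]
  rcases eq_or_ne ρ [] with rfl | hne
  · simp [dur]
  · have hpos : 0 < ρ.length := List.length_pos_iff.mpr hne
    rw [if_neg (by omega), cat_lt (show ρ.length - 1 < ρ.length by omega), ← dur_eq_get hne]

lemma cat_elapsed_gt {ρ : List (A × ℝ)} {T : ℝ} {μ : ℕ → A × ℝ} {j : ℕ} :
    (cat ρ T μ (ρ.length + j + 1)).2 - (cat ρ T μ (ρ.length + j)).2
      = (μ (j + 1)).2 - (μ j).2 := by
  rw [cat_ge (by omega), cat_ge (by omega)]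
  have h1 : ρ.length + j + 1 - ρ.length = j + 1 := by omega
  have h2 : ρ.length + j - ρ.length = j := by omega
  rw [h1, h2]
  ring

lemma step_shift (N : TBA A Q C) (q : Q) (v : C → ℝ) (σ d : ℝ) (a : A) (s' : Q × (C → ℝ)) :
    Step N (q, fun x => v x + σ) a d s' ↔ Step N (q, v) a (d + σ) s' := by
  have h : (fun x => ((q, fun x => v x + σ) : Q × (C → ℝ)).2 x + d)
      = (fun x => ((q, v) : Q × (C → ℝ)).2 x + (d + σ)) := by
    funext x; show v x + σ + d = v x + (d + σ); ring
  unfold Step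
  rw [h]

lemma stitch (N : TBA A Q C) {ρ : List (A × ℝ)} {μ : ℕ → A × ℝ} {T σ : ℝ}
    (hT : T = dur ρ + σ) {s0 : Q × (C → ℝ)} {q : Q} {v : C → ℝ}
    (hfin : FinRun N s0 ρ (q, v))
    {r₁ : ℕ → Q × (C → ℝ)} (hinf : InfRun N (q, fun x => v x + σ) μ r₁) :
    ∃ r, InfRun N s0 (cat ρ T μ) r ∧ ∀ j, (r (ρ.length + j)).1 = (r₁ j).1 := by
  obtain ⟨r₀, h00, h0e, h0s⟩ := hfin
  refine ⟨fun i => if i ≤ ρ.length then r₀ i else r₁ (i - ρ.length),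
    ⟨by simp [h00], fun i => ?_⟩, fun j => ?_⟩
  · rcases lt_trichotomy i ρ.length with hi | heq | hi
    · simp only [if_pos (le_of_lt hi), if_pos (Nat.succ_le_of_lt hi)]
      have hp : ρ[i]? = some (ρ.get ⟨i, hi⟩) := by
        simp [List.getElem?_eq_getElem hi]
      have hs := h0s i hi _ hp
      rw [cat_elapsed_lt hi, cat_lt hi]
      exact hs
    · subst heq
      simp only [le_refl, if_pos, if_neg (by omega : ¬ ρ.length + 1 ≤ ρ.length)]
      have hr1 : ρ.length + 1 - ρ.length = 1 := by omega
      rw [hr1, h0e]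
      have hel : (cat ρ T μ ρ.length).2
            - (if ρ.length = 0 then 0 else (cat ρ T μ (ρ.length - 1)).2)
          = (μ 0).2 + σ := by rw [cat_elapsed_at, hT]; ring
      rw [hel]
      have hw := cat_ge (T := T) (μ := μ) (le_refl ρ.length)
      rw [Nat.sub_self] at hw
      rw [hw]
      have hstep := hinf.2 0
      rw [if_pos rfl, sub_zero, hinf.1, step_shift] at hstep
      exact hstep
    · obtain ⟨j, rfl⟩ : ∃ j, i = ρ.length + j + 1 := ⟨i - ρ.length - 1, by omega⟩
      simp only [if_neg (by omega : ¬ ρ.length + j + 1 ≤ ρ.length),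
        if_neg (by omega : ¬ ρ.length + j + 1 + 1 ≤ ρ.length)]
      have e1 : ρ.length + j + 1 - ρ.length = j + 1 := by omega
      have e2 : ρ.length + j + 1 + 1 - ρ.length = j + 2 := by omega
      rw [e1, e2]
      have hel : (cat ρ T μ (ρ.length + j + 1)).2
            - (if ρ.length + j + 1 = 0 then 0 else (cat ρ T μ (ρ.length + j + 1 - 1)).2)
          = (μ (j + 1)).2 - (μ j).2 := by
        rw [if_neg (by omega)]
        have e4 : ρ.length + j + 1 - 1 = ρ.length + j := by omega
        rw [e4]
        exact cat_elapsed_gt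
      rw [hel]
      have hw := cat_ge (T := T) (μ := μ) (show ρ.length ≤ ρ.length + j + 1 by omega)
      rw [e1] at hw
      rw [hw]
      have hstep := hinf.2 (j + 1)
      rw [if_neg (by omega)] at hstep
      simpa using hstep
  · rcases Nat.eq_zero_or_pos j with rfl | hj
    · simp only [Nat.add_zero, le_refl, if_pos, h0e, hinf.1]
    · simp only [if_neg (by omega : ¬ ρ.length + j ≤ ρ.length), Nat.add_sub_cancel_left]

lemma split (N : TBA A Q C) {ρ : List (A × ℝ)} {μ : ℕ → A × ℝ} {T σ : ℝ}
    (hT : T = dur ρ + σ) {s0 : Q × (C → ℝ)} {r : ℕ → Q × (C → ℝ)}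
    (hr : InfRun N s0 (cat ρ T μ) r) :
    FinRun N s0 ρ (r ρ.length) ∧
    ∃ r₁, InfRun N ((r ρ.length).1, fun x => (r ρ.length).2 x + σ) μ r₁ ∧
      ∀ j, (r₁ j).1 = (r (ρ.length + j)).1 := by
  constructor
  · refine ⟨r, hr.1, rfl, fun i hi p hp => ?_⟩
    have hget : p = ρ.get ⟨i, hi⟩ := by
      rw [List.getElem?_eq_getElem hi] at hp
      exact (Option.some_inj.mp hp).symm
    subst hget
    have hs := hr.2 i
    rw [cat_elapsed_lt hi, cat_lt hi] at hs
    exact hs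
  · refine ⟨fun j => if j = 0 then ((r ρ.length).1, fun x => (r ρ.length).2 x + σ)
        else r (ρ.length + j),
      ⟨by simp, fun j => ?_⟩, fun j => ?_⟩
    · rcases Nat.eq_zero_or_pos j with rfl | hj
      · norm_num
        rw [step_shift]
        have hs := hr.2 ρ.length
        have hel : (cat ρ T μ ρ.length).2
              - (if ρ.length = 0 then 0 else (cat ρ T μ (ρ.length - 1)).2)
            = (μ 0).2 + σ := by rw [cat_elapsed_at, hT]; ring
        rw [hel] at hs
        have hw := cat_ge (T := T) (μ := μ) (le_refl ρ.length)
        rw [Nat.sub_self] at hw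
        rw [hw] at hs
        simpa using hs
      · simp only [if_neg (by omega : ¬ j = 0), if_neg (by omega : ¬ j + 1 = 0)]
        obtain ⟨j', rfl⟩ : ∃ j', j = j' + 1 := ⟨j - 1, by omega⟩
        have hs := hr.2 (ρ.length + j' + 1)
        have hel : (cat ρ T μ (ρ.length + j' + 1)).2
              - (if ρ.length + j' + 1 = 0 then 0 else (cat ρ T μ (ρ.length + j' + 1 - 1)).2)
            = (μ (j' + 1)).2 - (μ j').2 := by
          rw [if_neg (by omega)]
          have e4 : ρ.length + j' + 1 - 1 = ρ.length + j' := by omega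
          rw [e4]
          exact cat_elapsed_gt
        rw [hel] at hs
        have hw := cat_ge (T := T) (μ := μ) (show ρ.length ≤ ρ.length + j' + 1 by omega)
        have e1 : ρ.length + j' + 1 - ρ.length = j' + 1 := by omega
        rw [e1] at hw
        rw [hw] at hs
        have e5 : ρ.length + (j' + 1) = ρ.length + j' + 1 := by omega
        have e6 : ρ.length + (j' + 1 + 1) = ρ.length + j' + 1 + 1 := by omega
        rw [e5, e6]
        simpa using hs
    · rcases Nat.eq_zero_or_pos j with rfl | hj
      · simp
      · simp [if_neg (by omega : ¬ j = 0)]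

lemma key (N : TBA A Q C) (D : Set (ℝ × ℝ)) (ρs : List (A × ℝ)) (t : ℝ) :
    ReachSet N D ρs t ∩ NonEmptyStates N = ∅ ↔
    ∀ d ∈ D, ∀ ρ ∈ GTel d.1 d.2 ρs t, ∀ μ, IsITW μ →
      cat ρ (max (dur ρ) (t - (d.1 + d.2))) μ ∉ Lang N := by
  constructor
  · intro hemp d hd ρ hρ μ hμ hmem
    set σ := max 0 (t - (dur ρ + d.1 + d.2)) with hσ
    have hT : max (dur ρ) (t - (d.1 + d.2)) = dur ρ + σ := by
      rw [max_decomp, hσ]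
      congr 2
      ring
    obtain ⟨q0, hq0, hitw, r, hrun, hacc⟩ := hmem
    rw [hT] at hrun
    obtain ⟨hfin, r₁, hinf, hfst⟩ := split N rfl hrun
    have hsmem : ((r ρ.length).1, fun x => (r ρ.length).2 x + σ) ∈ ReachSet N D ρs t :=
      ⟨d, hd, ρ, hρ, q0, hq0, (r ρ.length).2, hfin, rfl⟩
    have hne : ((r ρ.length).1, fun x => (r ρ.length).2 x + σ) ∈ NonEmptyStates N := by
      refine ⟨μ, hμ, r₁, hinf, ?_⟩
      have hinf2 : ({i | (r i).1 ∈ N.acc} \ Set.Iio ρ.length).Infinite :=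
        hacc.diff (Set.finite_Iio ρ.length)
      have hpre := hinf2.preimage (f := fun j => ρ.length + j) (by
        rintro x ⟨hx1, hx2⟩
        simp only [Set.mem_Iio, not_lt] at hx2
        exact ⟨x - ρ.length, show ρ.length + (x - ρ.length) = x by omega⟩)
      refine Set.Infinite.mono ?_ hpre
      intro j hj
      simp only [Set.mem_preimage, Set.mem_diff, Set.mem_setOf_eq] at hj
      have := hj.1
      simp only [Set.mem_setOf_eq]
      rw [hfst j]
      exact this
    exact absurd hemp (by
      rw [Set.eq_empty_iff_forall_notMem]
      push_neg
      exact ⟨_, hsmem, hne⟩)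
  · intro hall
    rw [Set.eq_empty_iff_forall_notMem]
    rintro s ⟨⟨d, hd, ρ, hρ, q0, hq0, v, hfin, hs2⟩, μ, hμ, r₁, hinf, hacc⟩
    set σ := max 0 (t - (dur ρ + d.1 + d.2)) with hσ
    have hT : max (dur ρ) (t - (d.1 + d.2)) = dur ρ + σ := by
      rw [max_decomp, hσ]
      congr 2
      ring
    have hinf' : InfRun N (s.1, fun x => v x + σ) μ r₁ := by
      have hs : s = (s.1, fun x => v x + σ) := by
        rw [← hs2]
      rwa [hs] at hinf
    obtain ⟨r, hrun, hfst⟩ := stitch N hT hfin hinf'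
    have hFTW : IsFTW ρ := hρ.1.1
    have hdur0 : 0 ≤ dur ρ := dur_nonneg hFTW
    have hitw : IsITW (cat ρ (max (dur ρ) (t - (d.1 + d.2))) μ) :=
      isITW_cat hFTW hμ (le_max_left _ _) (le_trans hdur0 (le_max_left _ _))
    refine hall d hd ρ hρ μ hμ ⟨q0, hq0, hitw, r, hrun, ?_⟩
    have him : ((fun j => ρ.length + j) '' {j | (r₁ j).1 ∈ N.acc}).Infinite :=
      hacc.image (Function.Injective.injOn (fun a b h => by omega))
    refine Set.Infinite.mono ?_ him
    rintro i ⟨j, hj, rfl⟩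
    simp only [Set.mem_setOf_eq] at hj ⊢
    rw [hfst j]
    exact hj

end RunLemmas

/-- correctness of the automata-based monitor:
`M_D(A, Ā)(ρ*, t) = V^el_D(L(A))(ρ*, t)`. -/
theorem stmt14 {A : Type u} [Nonempty A] {Q : Type v} {C : Type w}
    {Q' : Type*} {C' : Type*} (M : TBA A Q C) (Mbar : TBA A Q' C')
    (hcomp : ∀ μ : ℕ → A × ℝ, IsITW μ → (μ ∈ Lang Mbar ↔ μ ∉ Lang M))
    (D : Set (ℝ × ℝ)) (hD : DelaySet D)
    (ρs : List (A × ℝ)) (hobs : DObs D ρs) (t : ℝ) (ht : dur ρs ≤ t) :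
    Monitor M Mbar D ρs t = verdictEL D (Lang M) ρs t := by
  have hM := key M D ρs t
  have hbar' : (ReachSet Mbar D ρs t ∩ NonEmptyStates Mbar = ∅) ↔
      ∀ d ∈ D, ∀ ρ ∈ GTel d.1 d.2 ρs t, ∀ μ, IsITW μ →
        cat ρ (max (dur ρ) (t - (d.1 + d.2))) μ ∈ Lang M := by
    rw [key Mbar D ρs t]
    have hitw : ∀ d ∈ D, ∀ ρ ∈ GTel d.1 d.2 ρs t, ∀ μ, IsITW μ →
        IsITW (cat ρ (max (dur ρ) (t - (d.1 + d.2))) μ) := by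
      intro d hd ρ hρ μ hμ
      exact isITW_cat hρ.1.1 hμ (le_max_left _ _)
        (le_trans (dur_nonneg hρ.1.1) (le_max_left _ _))
    constructor
    · intro h d hd ρ hρ μ hμ
      by_contra hc
      exact h d hd ρ hρ μ hμ ((hcomp _ (hitw d hd ρ hρ μ hμ)).mpr hc)
    · intro h d hd ρ hρ μ hμ hmem
      exact (hcomp _ (hitw d hd ρ hρ μ hμ)).mp hmem (h d hd ρ hρ μ hμ)
  unfold Monitor verdictEL
  simp only [hbar', hM]
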